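/- For any finite simple graph H with k edges and any two graphons f, g, the homomorphism densities satisfy |t(H,f) - t(H,g)| ≤ k·δ_□(f,g), where δ_□ is the cut distance. -/

import Mathlib

open MeasureTheory

/-- Homomorphism density `t(H,h)` for a graph on `Fin ℓ` with edge finset `E`. -/
noncomputable def homDensity (ℓ : ℕ) (E : Finset (Fin ℓ × Fin ℓ)) (h : ℝ → ℝ → ℝ) : ℝ :=
  ∫ x : Fin ℓ → ℝ, ∏ e ∈ E, h (x e.1) (x e.2)
    ∂(Measure.pi fun _ => volume.restrict (Set.Icc 0 1))

/-- The cut norm distance `d_□(f,g) = sup_{S,T ⊆ [0,1]} |∫_{S×T} (f-g)|`. -/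
noncomputable def cutDist (f g : ℝ → ℝ → ℝ) : ℝ :=
  ⨆ S : {S : Set ℝ // MeasurableSet S}, ⨆ T : {T : Set ℝ // MeasurableSet T},
    |∫ x in S.1 ∩ Set.Icc 0 1, ∫ y in T.1 ∩ Set.Icc 0 1, (f x y - g x y)|

/-- A measure-preserving bijection of `[0,1]`. -/
structure MPBij where
  toFun : ℝ → ℝ
  bijOn : Set.BijOn toFun (Set.Icc 0 1) (Set.Icc 0 1)
  measPres : MeasurePreserving toFun (volume.restrict (Set.Icc 0 1))
      (volume.restrict (Set.Icc 0 1))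

/-- The cut distance `δ_□` between (representatives of) graphons. -/
noncomputable def cutDistDelta (f g : ℝ → ℝ → ℝ) : ℝ :=
  ⨅ σ₁ : MPBij, ⨅ σ₂ : MPBij,
    cutDist (fun x y => f (σ₁.toFun x) (σ₁.toFun y)) (fun x y => g (σ₂.toFun x) (σ₂.toFun y))


/-! Relabelling by measure-preserving bijections does not change homomorphism densities, so it
suffices to show `|t(H,f) - t(H,g)| ≤ k · d_□(f,g)` and take the infimum. Telescoping
`∏ f - ∏ g` changes one edge `ij` at a time. Since `H` has no loops and no edge other than `ij`
joins `i` and `j`, once all coordinates other than `x_i, x_j` are fixed the remaining factors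
split into a `[0,1]`-valued function of `x_i` times one of `x_j`. Integrating over `x_i, x_j`
first therefore leaves `∫∫ (f - g)(s,t) a(s) b(t)`, which is bilinear in `a, b`, hence maximised
at indicator functions, where it is a cut-norm term. -/

open Set Function

section WeightedIntegral

variable {α β : Type*} [MeasurableSpace α] [MeasurableSpace β] {μ : Measure α} {ν : Measure β}

lemma integral_mul_le_setIntegral_nonneg {c K : α → ℝ} (hc : AEStronglyMeasurable c μ)
    (hc01 : ∀ x, c x ∈ Icc 0 1) (hK : Measurable K) (hKi : Integrable K μ) :
    ∫ x, c x * K x ∂μ ≤ ∫ x in {x | 0 ≤ K x}, K x ∂μ := by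
  have hS : MeasurableSet {x | 0 ≤ K x} := measurableSet_le measurable_const hK
  rw [← integral_indicator hS]
  refine integral_mono (hKi.bdd_mul hc (c := 1) (ae_of_all _ fun x => ?_)) (hKi.indicator hS)
    fun x => ?_
  · rw [Real.norm_eq_abs, abs_of_nonneg (hc01 x).1]
    exact (hc01 x).2
  · by_cases hx : 0 ≤ K x
    · rw [indicator_of_mem (s := {x | 0 ≤ K x}) hx]
      exact mul_le_of_le_one_left hx (hc01 x).2
    · rw [indicator_of_notMem (s := {x | 0 ≤ K x}) hx]
      exact mul_nonpos_of_nonneg_of_nonpos (hc01 x).1 (le_of_not_ge hx)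

lemma exists_integral_mul_mul_le_setIntegral [SFinite μ] [SFinite ν] {F : α → β → ℝ}
    (hF : Measurable (uncurry F)) (hFi : Integrable (uncurry F) (μ.prod ν))
    {a : α → ℝ} {b : β → ℝ} (ha : Measurable a) (hb : Measurable b)
    (ha01 : ∀ x, a x ∈ Icc 0 1) (hb01 : ∀ y, b y ∈ Icc 0 1) :
    ∃ S T, MeasurableSet S ∧ MeasurableSet T ∧
      ∫ x, ∫ y, F x y * a x * b y ∂ν ∂μ ≤ ∫ x in S, ∫ y in T, F x y ∂ν ∂μ := by
  have hbnd : ∀ y, ‖b y‖ ≤ 1 := fun y => by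
    rw [Real.norm_eq_abs, abs_of_nonneg (hb01 y).1]; exact (hb01 y).2
  have hFb : Integrable (fun p : α × β => F p.1 p.2 * b p.2) (μ.prod ν) :=
    hFi.mul_bdd (hb.comp measurable_snd).aestronglyMeasurable (ae_of_all _ fun p => hbnd p.2)
  set K : α → ℝ := fun x => ∫ y, F x y * b y ∂ν
  have hK : Measurable K :=
    (hF.mul (hb.comp measurable_snd)).stronglyMeasurable.integral_prod_right'.measurable
  set S := {x | 0 ≤ K x}
  have hS : MeasurableSet S := measurableSet_le measurable_const hK
  set L : β → ℝ := fun y => ∫ x in S, F x y ∂μ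
  have hL : Measurable L := hF.stronglyMeasurable.integral_prod_left'.measurable
  have hLi : Integrable L ν :=
    (hFi.mono_measure (Measure.prod_mono Measure.restrict_le_self le_rfl)).integral_prod_right
  refine ⟨S, {y | 0 ≤ L y}, hS, measurableSet_le measurable_const hL, ?_⟩
  calc ∫ x, ∫ y, F x y * a x * b y ∂ν ∂μ = ∫ x, a x * K x ∂μ := by
        refine integral_congr_ae (ae_of_all _ fun x => ?_)
        simp only [K, ← integral_const_mul]
        congr 1 with y
        ring
    _ ≤ ∫ x in S, K x ∂μ :=
        integral_mul_le_setIntegral_nonneg ha.aestronglyMeasurable ha01 hK hFb.integral_prod_left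
    _ = ∫ y, b y * L y ∂ν := by
        rw [integral_integral_swap
          (hFb.mono_measure (Measure.prod_mono Measure.restrict_le_self le_rfl))]
        refine integral_congr_ae (ae_of_all _ fun y => ?_)
        simp only [L, ← integral_const_mul]
        congr 1 with x
        ring
    _ ≤ ∫ y in {y | 0 ≤ L y}, L y ∂ν :=
        integral_mul_le_setIntegral_nonneg hb.aestronglyMeasurable hb01 hL hLi
    _ = ∫ x in S, ∫ y in {y | 0 ≤ L y}, F x y ∂ν ∂μ :=
        (integral_integral_swap (hFi.mono_measure
          (Measure.prod_mono Measure.restrict_le_self Measure.restrict_le_self))).symm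

end WeightedIntegral

section PiUpdate

variable {ι α : Type*} [Fintype ι] [DecidableEq ι] [MeasurableSpace α] (μ : Measure α)
  [IsProbabilityMeasure μ]

lemma measurePreserving_update (i : ι) :
    MeasurePreserving (fun p : (ι → α) × α => update p.1 i p.2)
      ((Measure.pi fun _ => μ).prod μ) (Measure.pi fun _ => μ) := by
  refine ⟨measurable_update', (Measure.pi_eq fun B hB => ?_).symm⟩
  have hpre : (fun p : (ι → α) × α => update p.1 i p.2) ⁻¹' univ.pi B
      = univ.pi (update B i univ) ×ˢ B i := by
    ext ⟨x, s⟩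
    simp only [mem_preimage, mem_prod, mem_univ_pi]
    rw [forall_update_iff (p := fun m t => t ∈ B m), forall_update_iff (p := fun m S => x m ∈ S)]
    simp [and_comm]
  have hsplit : ∀ C : ι → Set α, ∏ m, μ (C m) = μ (C i) * ∏ m ∈ Finset.univ.erase i, μ (C m) :=
    fun C => (Finset.mul_prod_erase _ _ (Finset.mem_univ i)).symm
  rw [Measure.map_apply measurable_update' (.univ_pi hB), hpre, Measure.prod_prod, Measure.pi_pi,
    hsplit, hsplit B, update_self, measure_univ, one_mul, mul_comm]
  congr 1
  exact Finset.prod_congr rfl fun m hm => by rw [update_of_ne (Finset.ne_of_mem_erase hm)]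

variable {E : Type*} [NormedAddCommGroup E] {Φ : (ι → α) → E}

lemma integrable_comp_update (hΦ : Integrable Φ (Measure.pi fun _ => μ)) (i : ι) :
    Integrable (fun p : (ι → α) × α => Φ (update p.1 i p.2)) ((Measure.pi fun _ => μ).prod μ) :=
  ((measurePreserving_update μ i).integrable_comp hΦ.1).2 hΦ

variable [NormedSpace ℝ E]

lemma integral_eq_integral_integral_update (hΦ : Integrable Φ (Measure.pi fun _ => μ)) (i : ι) :
    ∫ x, Φ x ∂(Measure.pi fun _ => μ)
      = ∫ x, ∫ s, Φ (update x i s) ∂μ ∂(Measure.pi fun _ => μ) := by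
  have hU := measurePreserving_update μ i
  conv_lhs => rw [← hU.map_eq]
  rw [integral_map hU.measurable.aemeasurable (by rw [hU.map_eq]; exact hΦ.1)]
  exact integral_prod _ (integrable_comp_update μ hΦ i)

lemma integral_eq_integral_integral_update_update (hΦ : Integrable Φ (Measure.pi fun _ => μ))
    (i j : ι) :
    ∫ x, Φ x ∂(Measure.pi fun _ => μ)
      = ∫ x, ∫ s, ∫ t, Φ (update (update x i s) j t) ∂μ ∂μ ∂(Measure.pi fun _ => μ) := by
  rw [integral_eq_integral_integral_update μ hΦ j,
    integral_eq_integral_integral_update μ (integrable_comp_update μ hΦ j).integral_prod_left i]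

end PiUpdate

section FactorsAt

variable {ι α : Type*} [MeasurableSpace α]

lemma Measurable.comp_eval_eval {h : α → α → ℝ} (hh : Measurable (uncurry h)) (u v : ι) :
    Measurable fun y : ι → α => h (y u) (y v) :=
  hh.comp (f := fun y : ι → α => (y u, y v)) (by fun_prop)

variable [DecidableEq ι] {i j : ι}

def FactorsAt (i j : ι) (W : (ι → α) → ℝ) : Prop :=
  ∀ x, ∃ a b : α → ℝ, Measurable a ∧ Measurable b ∧ (∀ s, a s ∈ Icc 0 1) ∧
    (∀ t, b t ∈ Icc 0 1) ∧ ∀ s t, W (update (update x i s) j t) = a s * b t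

lemma factorsAt_one : FactorsAt i j (1 : (ι → α) → ℝ) := fun _ =>
  ⟨1, 1, measurable_const, measurable_const, fun _ => unitInterval.one_mem,
    fun _ => unitInterval.one_mem, fun _ _ => (mul_one 1).symm⟩

lemma FactorsAt.mul {V W : (ι → α) → ℝ} (hV : FactorsAt i j V) (hW : FactorsAt i j W) :
    FactorsAt i j (V * W) := fun x => by
  obtain ⟨a, b, ha, hb, ha01, hb01, hab⟩ := hV x
  obtain ⟨c, d, hc, hd, hc01, hd01, hcd⟩ := hW x
  refine ⟨a * c, b * d, ha.mul hc, hb.mul hd, fun s => unitInterval.mul_mem (ha01 s) (hc01 s),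
    fun t => unitInterval.mul_mem (hb01 t) (hd01 t), fun s t => ?_⟩
  simp only [Pi.mul_apply, hab, hcd]
  ring

lemma FactorsAt.prod {κ : Type*} {s : Finset κ} {W : κ → (ι → α) → ℝ}
    (hW : ∀ k ∈ s, FactorsAt i j (W k)) : FactorsAt i j fun x => ∏ k ∈ s, W k x := by
  rw [← Finset.prod_fn]
  exact Finset.prod_induction _ _ (fun _ _ => FactorsAt.mul) factorsAt_one hW

lemma factorsAt_edge (hij : i ≠ j) {h : α → α → ℝ} (hh : Measurable (uncurry h))
    (h01 : ∀ x y, h x y ∈ Icc 0 1) {e : ι × ι} (he : e ≠ (i, j)) (he' : e ≠ (j, i)) :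
    FactorsAt i j fun y => h (y e.1) (y e.2) := fun x => by
  by_cases hi : e.1 ≠ i ∧ e.2 ≠ i
  · refine ⟨1, fun t => h (update x j t e.1) (update x j t e.2), measurable_const,
      (hh.comp_eval_eval e.1 e.2).comp (measurable_update x), fun _ => unitInterval.one_mem,
      fun _ => h01 _ _, fun s t => ?_⟩
    beta_reduce
    rw [update_comm hij, update_of_ne hi.1, update_of_ne hi.2, Pi.one_apply, one_mul]
  · have hj : e.1 ≠ j ∧ e.2 ≠ j := by
      grind [Prod.ext_iff]
    refine ⟨fun s => h (update x i s e.1) (update x i s e.2), 1,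
      (hh.comp_eval_eval e.1 e.2).comp (measurable_update x), measurable_const,
      fun _ => h01 _ _, fun _ => unitInterval.one_mem, fun s t => ?_⟩
    beta_reduce
    rw [update_of_ne hj.1, update_of_ne hj.2, Pi.one_apply, mul_one]

lemma factorsAt_prod_edge (hij : i ≠ j) {h : α → α → ℝ} (hh : Measurable (uncurry h))
    (h01 : ∀ x y, h x y ∈ Icc 0 1) {C : Finset (ι × ι)} (hC : ∀ e ∈ C, e ≠ (i, j) ∧ e ≠ (j, i)) :
    FactorsAt i j fun y => ∏ e ∈ C, h (y e.1) (y e.2) :=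
  FactorsAt.prod fun e he => factorsAt_edge hij hh h01 (hC e he).1 (hC e he).2

end FactorsAt

lemma Finset.prod_sub_prod_eq_sum {ι R : Type*} [CommRing R] [LinearOrder ι] (s : Finset ι)
    (f g : ι → R) :
    ∏ i ∈ s, f i - ∏ i ∈ s, g i
      = ∑ i ∈ s, (f i - g i) * ((∏ j ∈ s with j < i, f j) * ∏ j ∈ s with i < j, g j) := by
  have h := Finset.prod_add_ordered s g (f - g)
  simp only [Pi.sub_apply, add_sub_cancel] at h
  rw [h, add_sub_cancel_left]
  exact Finset.sum_congr rfl fun i _ => by ring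

lemma Finset.exists_prod_sub_prod_eq_sum {ι R : Type*} [DecidableEq ι] [CommRing R]
    (s : Finset ι) (f g : ι → R) :
    ∃ A B : ι → Finset ι, (∀ i, A i ⊆ s.erase i) ∧ (∀ i, B i ⊆ s.erase i) ∧
      ∏ i ∈ s, f i - ∏ i ∈ s, g i
        = ∑ i ∈ s, (f i - g i) * ((∏ j ∈ A i, f j) * ∏ j ∈ B i, g j) := by
  let := IsWellOrder.linearOrder (WellOrderingRel (α := ι))
  refine ⟨fun i => s.filter (· < i), fun i => s.filter (i < ·), fun i j hj => ?_, fun i j hj => ?_,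
    s.prod_sub_prod_eq_sum f g⟩
  · obtain ⟨hjs, hji⟩ := Finset.mem_filter.1 hj
    exact Finset.mem_erase.2 ⟨hji.ne, hjs⟩
  · obtain ⟨hjs, hji⟩ := Finset.mem_filter.1 hj
    exact Finset.mem_erase.2 ⟨hji.ne', hjs⟩

lemma abs_setIntegral_le_one {α : Type*} [MeasurableSpace α] {μ : Measure α}
    [IsProbabilityMeasure μ] {φ : α → ℝ} (hφ : ∀ x, |φ x| ≤ 1) (s : Set α) :
    |∫ x in s, φ x ∂μ| ≤ 1 := by
  have h := norm_integral_le_of_norm_le_const (μ := μ.restrict s) (f := φ) (C := 1)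
    (ae_of_all _ hφ)
  rw [Real.norm_eq_abs, measureReal_restrict_apply_univ, one_mul] at h
  exact h.trans measureReal_le_one

lemma abs_integral_le_of_forall_abs_le {α : Type*} [MeasurableSpace α] {μ : Measure α}
    [IsProbabilityMeasure μ] {φ : α → ℝ} {C : ℝ} (hφ : ∀ x, |φ x| ≤ C) :
    |∫ x, φ x ∂μ| ≤ C := by
  simpa using norm_integral_le_of_norm_le_const (μ := μ) (f := φ) (ae_of_all _ hφ)

instance : IsProbabilityMeasure (volume.restrict (Icc (0 : ℝ) 1)) :=
  ⟨by simp [Real.volume_Icc]⟩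

section UnitInterval

local notation "𝕀" => volume.restrict (Icc (0 : ℝ) 1)

variable {f g : ℝ → ℝ → ℝ}

lemma cutDist_eq_iSup_setIntegral (f g : ℝ → ℝ → ℝ) :
    cutDist f g = ⨆ S : {S : Set ℝ // MeasurableSet S}, ⨆ T : {T : Set ℝ // MeasurableSet T},
      |∫ x in S.1, ∫ y in T.1, (f x y - g x y) ∂𝕀 ∂𝕀| := by
  refine iSup_congr fun S => iSup_congr fun T => ?_
  rw [Measure.restrict_restrict S.2, Measure.restrict_restrict T.2]

lemma cutDist_comm (f g : ℝ → ℝ → ℝ) : cutDist g f = cutDist f g := by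
  refine iSup_congr fun S => iSup_congr fun T => ?_
  simp_rw [← neg_sub (f _ _), integral_neg, abs_neg]

lemma abs_sub_le_one_of_mem_Icc (hf01 : ∀ x y, f x y ∈ Icc 0 1) (hg01 : ∀ x y, g x y ∈ Icc 0 1)
    (x y : ℝ) : |f x y - g x y| ≤ 1 :=
  abs_sub_le_of_nonneg_of_le (hf01 x y).1 (hf01 x y).2 (hg01 x y).1 (hg01 x y).2

lemma abs_setIntegral_le_cutDist (hf01 : ∀ x y, f x y ∈ Icc 0 1)
    (hg01 : ∀ x y, g x y ∈ Icc 0 1) {S T : Set ℝ} (hS : MeasurableSet S) (hT : MeasurableSet T) :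
    |∫ x in S, ∫ y in T, (f x y - g x y) ∂𝕀 ∂𝕀| ≤ cutDist f g := by
  have hle : ∀ S T : Set ℝ, |∫ x in S, ∫ y in T, (f x y - g x y) ∂𝕀 ∂𝕀| ≤ 1 := fun S T =>
    abs_setIntegral_le_one
      (fun x => abs_setIntegral_le_one (abs_sub_le_one_of_mem_Icc hf01 hg01 x) T) S
  rw [cutDist_eq_iSup_setIntegral]
  refine le_ciSup_of_le ⟨1, ?_⟩ (⟨S, hS⟩ : {S : Set ℝ // MeasurableSet S}) ?_
  · rintro _ ⟨S', rfl⟩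
    exact ciSup_le fun T' => hle _ _
  · refine le_ciSup (f := fun T' : {T : Set ℝ // MeasurableSet T} =>
      |∫ x in S, ∫ y in T'.1, (f x y - g x y) ∂𝕀 ∂𝕀|) ⟨1, ?_⟩ ⟨T, hT⟩
    rintro _ ⟨T', rfl⟩
    exact hle _ _

lemma integral_mul_mul_le_cutDist (hf : Measurable (uncurry f)) (hg : Measurable (uncurry g))
    (hf01 : ∀ x y, f x y ∈ Icc 0 1) (hg01 : ∀ x y, g x y ∈ Icc 0 1) {a b : ℝ → ℝ}
    (ha : Measurable a) (hb : Measurable b) (ha01 : ∀ x, a x ∈ Icc 0 1)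
    (hb01 : ∀ y, b y ∈ Icc 0 1) :
    ∫ x, ∫ y, (f x y - g x y) * a x * b y ∂𝕀 ∂𝕀 ≤ cutDist f g := by
  have hint : Integrable (uncurry fun x y => f x y - g x y) ((𝕀).prod 𝕀) :=
    .of_bound (hf.sub hg).aestronglyMeasurable 1
      (ae_of_all _ fun p => abs_sub_le_one_of_mem_Icc hf01 hg01 p.1 p.2)
  obtain ⟨S, T, hS, hT, h⟩ :=
    exists_integral_mul_mul_le_setIntegral (hf.sub hg) hint ha hb ha01 hb01
  exact h.trans ((le_abs_self _).trans (abs_setIntegral_le_cutDist hf01 hg01 hS hT))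

lemma abs_integral_mul_mul_le_cutDist (hf : Measurable (uncurry f)) (hg : Measurable (uncurry g))
    (hf01 : ∀ x y, f x y ∈ Icc 0 1) (hg01 : ∀ x y, g x y ∈ Icc 0 1) {a b : ℝ → ℝ}
    (ha : Measurable a) (hb : Measurable b) (ha01 : ∀ x, a x ∈ Icc 0 1)
    (hb01 : ∀ y, b y ∈ Icc 0 1) :
    |∫ x, ∫ y, (f x y - g x y) * a x * b y ∂𝕀 ∂𝕀| ≤ cutDist f g := by
  refine abs_le.2 ⟨?_, integral_mul_mul_le_cutDist hf hg hf01 hg01 ha hb ha01 hb01⟩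
  have h := integral_mul_mul_le_cutDist hg hf hg01 hf01 ha hb ha01 hb01
  simp_rw [← neg_sub (f _ _), neg_mul, integral_neg, cutDist_comm] at h
  linarith

lemma integrable_edge_mul {ι : Type*} [Fintype ι] (hf : Measurable (uncurry f))
    (hg : Measurable (uncurry g)) (hf01 : ∀ x y, f x y ∈ Icc 0 1)
    (hg01 : ∀ x y, g x y ∈ Icc 0 1) (i j : ι) {W : (ι → ℝ) → ℝ} (hW : Measurable W)
    (hW01 : ∀ x, W x ∈ Icc 0 1) :
    Integrable (fun x => (f (x i) (x j) - g (x i) (x j)) * W x) (Measure.pi fun _ : ι => 𝕀) :=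
  .of_bound (((hf.comp_eval_eval i j).sub (hg.comp_eval_eval i j)).mul hW).aestronglyMeasurable 1
    (ae_of_all _ fun x => by
      rw [norm_mul, Real.norm_eq_abs, Real.norm_eq_abs, abs_of_nonneg (hW01 x).1]
      exact mul_le_one₀ (abs_sub_le_one_of_mem_Icc hf01 hg01 _ _) (hW01 x).1 (hW01 x).2)

lemma abs_integral_edge_mul_le_cutDist {ι : Type*} [Fintype ι] [DecidableEq ι] {i j : ι}
    (hij : i ≠ j) (hf : Measurable (uncurry f)) (hg : Measurable (uncurry g))
    (hf01 : ∀ x y, f x y ∈ Icc 0 1) (hg01 : ∀ x y, g x y ∈ Icc 0 1) {W : (ι → ℝ) → ℝ}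
    (hW : Measurable W) (hW01 : ∀ x, W x ∈ Icc 0 1) (hWf : FactorsAt i j W) :
    |∫ x, (f (x i) (x j) - g (x i) (x j)) * W x ∂(Measure.pi fun _ : ι => 𝕀)|
      ≤ cutDist f g := by
  rw [integral_eq_integral_integral_update_update _
    (integrable_edge_mul hf hg hf01 hg01 i j hW hW01) i j]
  refine abs_integral_le_of_forall_abs_le fun x => ?_
  obtain ⟨a, b, ha, hb, ha01, hb01, hab⟩ := hWf x
  have hsplit : ∀ s t, (f (update (update x i s) j t i) (update (update x i s) j t j)
      - g (update (update x i s) j t i) (update (update x i s) j t j))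
        * W (update (update x i s) j t) = (f s t - g s t) * a s * b t := fun s t => by
    rw [update_self, update_of_ne hij, update_self, hab, mul_assoc]
  simp_rw [hsplit]
  exact abs_integral_mul_mul_le_cutDist hf hg hf01 hg01 ha hb ha01 hb01

lemma integrable_prod_edge {ι : Type*} [Fintype ι] {h : ℝ → ℝ → ℝ}
    (hh : Measurable (uncurry h)) (h01 : ∀ x y, h x y ∈ Icc 0 1) (E : Finset (ι × ι)) :
    Integrable (fun x : ι → ℝ => ∏ e ∈ E, h (x e.1) (x e.2)) (Measure.pi fun _ : ι => 𝕀) :=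
  .of_bound (Finset.measurable_prod _ fun e _ => hh.comp_eval_eval e.1 e.2).aestronglyMeasurable 1
    (ae_of_all _ fun x => by
      have hx := unitInterval.prod_mem fun e (_ : e ∈ E) => h01 (x e.1) (x e.2)
      rw [Real.norm_eq_abs, abs_of_nonneg hx.1]
      exact hx.2)

lemma abs_homDensity_sub_le_card_mul_cutDist {ℓ : ℕ} {E : Finset (Fin ℓ × Fin ℓ)}
    (hloop : ∀ e ∈ E, e.1 ≠ e.2) (hsimple : ∀ e ∈ E, (e.2, e.1) ∉ E)
    (hf : Measurable (uncurry f)) (hg : Measurable (uncurry g))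
    (hf01 : ∀ x y, f x y ∈ Icc 0 1) (hg01 : ∀ x y, g x y ∈ Icc 0 1) :
    |homDensity ℓ E f - homDensity ℓ E g| ≤ E.card * cutDist f g := by
  obtain ⟨A, B, hA, hB, htele⟩ := E.exists_prod_sub_prod_eq_sum
    (fun e (x : Fin ℓ → ℝ) => f (x e.1) (x e.2)) (fun e (x : Fin ℓ → ℝ) => g (x e.1) (x e.2))
  set W : Fin ℓ × Fin ℓ → (Fin ℓ → ℝ) → ℝ := fun e x =>
    (∏ e' ∈ A e, f (x e'.1) (x e'.2)) * ∏ e' ∈ B e, g (x e'.1) (x e'.2)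
  have hdiff : ∀ x, ∏ e ∈ E, f (x e.1) (x e.2) - ∏ e ∈ E, g (x e.1) (x e.2)
      = ∑ e ∈ E, (f (x e.1) (x e.2) - g (x e.1) (x e.2)) * W e x := fun x => by
    simpa only [Finset.prod_apply, Finset.sum_apply, Pi.sub_apply, Pi.mul_apply] using
      congrFun htele x
  have hW : ∀ e ∈ E, Measurable (W e) ∧ (∀ x, W e x ∈ Icc 0 1) ∧ FactorsAt e.1 e.2 (W e) := by
    intro e he
    have hother : ∀ C ⊆ E.erase e, ∀ e' ∈ C, e' ≠ (e.1, e.2) ∧ e' ≠ (e.2, e.1) := fun C hC e' he' =>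
      ⟨Finset.ne_of_mem_erase (hC he'),
        fun hrev => hsimple e he (hrev ▸ Finset.mem_of_mem_erase (hC he'))⟩
    refine ⟨(Finset.measurable_prod _ fun _ _ => hf.comp_eval_eval _ _).mul
        (Finset.measurable_prod _ fun _ _ => hg.comp_eval_eval _ _),
      fun x => unitInterval.mul_mem (unitInterval.prod_mem fun _ _ => hf01 _ _)
        (unitInterval.prod_mem fun _ _ => hg01 _ _),
      (factorsAt_prod_edge (hloop e he) hf hf01 (hother _ (hA e))).mul
        (factorsAt_prod_edge (hloop e he) hg hg01 (hother _ (hB e)))⟩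
  calc |homDensity ℓ E f - homDensity ℓ E g|
      = |∑ e ∈ E, ∫ x, (f (x e.1) (x e.2) - g (x e.1) (x e.2)) * W e x
          ∂(Measure.pi fun _ => 𝕀)| := by
        rw [homDensity, homDensity, ← integral_sub (integrable_prod_edge hf hf01 E)
          (integrable_prod_edge hg hg01 E), ← integral_finsetSum _ fun e he =>
          integrable_edge_mul hf hg hf01 hg01 e.1 e.2 (hW e he).1 (hW e he).2.1]
        simp_rw [hdiff]
    _ ≤ ∑ e ∈ E, |∫ x, (f (x e.1) (x e.2) - g (x e.1) (x e.2)) * W e x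
          ∂(Measure.pi fun _ => 𝕀)| := Finset.abs_sum_le_sum_abs _ _
    _ ≤ ∑ _e ∈ E, cutDist f g := Finset.sum_le_sum fun e he =>
        abs_integral_edge_mul_le_cutDist (hloop e he) hf hg hf01 hg01 (hW e he).1 (hW e he).2.1
          (hW e he).2.2
    _ = E.card * cutDist f g := by rw [Finset.sum_const, nsmul_eq_mul]

end UnitInterval

namespace MPBij

instance : Inhabited MPBij := ⟨⟨id, bijOn_id _, .id _⟩⟩

lemma measurable_comp (σ : MPBij) {f : ℝ → ℝ → ℝ} (hf : Measurable (uncurry f)) :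
    Measurable (uncurry fun x y => f (σ.toFun x) (σ.toFun y)) :=
  hf.comp (σ.measPres.measurable.prodMap σ.measPres.measurable)

lemma homDensity_comp (σ : MPBij) {ℓ : ℕ} (E : Finset (Fin ℓ × Fin ℓ)) {f : ℝ → ℝ → ℝ}
    (hf : Measurable (uncurry f)) :
    homDensity ℓ E (fun x y => f (σ.toFun x) (σ.toFun y)) = homDensity ℓ E f := by
  have hσ : MeasurePreserving (fun (x : Fin ℓ → ℝ) m => σ.toFun (x m))
      (Measure.pi fun _ => volume.restrict (Icc 0 1))
      (Measure.pi fun _ => volume.restrict (Icc 0 1)) :=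
    measurePreserving_pi _ _ fun _ => σ.measPres
  unfold homDensity
  conv_rhs => rw [← hσ.map_eq]
  exact (integral_map hσ.measurable.aemeasurable
    (Finset.measurable_prod E fun e _ => hf.comp_eval_eval e.1 e.2).aestronglyMeasurable).symm

end MPBij

theorem homDensity_diff_le_cutDistDelta_general (ℓ : ℕ) (E : Finset (Fin ℓ × Fin ℓ))
    (hloop : ∀ e ∈ E, e.1 ≠ e.2) (hsimple : ∀ e ∈ E, (e.2, e.1) ∉ E)
    (k : ℕ) (hk : E.card = k)
    (f g : ℝ → ℝ → ℝ)
    (hfm : Measurable (Function.uncurry f)) (hgm : Measurable (Function.uncurry g))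
    (hfr : ∀ x y, f x y ∈ Set.Icc (0 : ℝ) 1) (hgr : ∀ x y, g x y ∈ Set.Icc (0 : ℝ) 1) :
    |homDensity ℓ E f - homDensity ℓ E g| ≤ k * cutDistDelta f g := by
  rw [cutDistDelta, Real.mul_iInf_of_nonneg (Nat.cast_nonneg k)]
  refine le_ciInf fun σ₁ => ?_
  rw [Real.mul_iInf_of_nonneg (Nat.cast_nonneg k)]
  refine le_ciInf fun σ₂ => ?_
  rw [← σ₁.homDensity_comp E hfm, ← σ₂.homDensity_comp E hgm, ← hk]
  exact abs_homDensity_sub_le_card_mul_cutDist hloop hsimple (σ₁.measurable_comp hfm)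
    (σ₂.measurable_comp hgm) (fun _ _ => hfr _ _) (fun _ _ => hgr _ _)

/-- the counting lemma for the cut distance `δ_□`: for a simple graph `H`
with `k` edges and graphons `f`, `g`, `|t(H,f) - t(H,g)| ≤ k · δ_□(f,g)`. -/
theorem homDensity_diff_le_cutDistDelta (ℓ : ℕ) (E : Finset (Fin ℓ × Fin ℓ))
    (hloop : ∀ e ∈ E, e.1 ≠ e.2) (hsimple : ∀ e ∈ E, (e.2, e.1) ∉ E)
    (k : ℕ) (hk : E.card = k)
    (f g : ℝ → ℝ → ℝ)
    (hfm : Measurable (Function.uncurry f)) (hgm : Measurable (Function.uncurry g))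
    (hfr : ∀ x y, f x y ∈ Set.Icc (0 : ℝ) 1) (hgr : ∀ x y, g x y ∈ Set.Icc (0 : ℝ) 1)
    (hfs : ∀ x y, f x y = f y x) (hgs : ∀ x y, g x y = g y x) :
    |homDensity ℓ E f - homDensity ℓ E g| ≤ k * cutDistDelta f g :=
  homDensity_diff_le_cutDistDelta_general ℓ E hloop hsimple k hk f g hfm hgm hfr hgr
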